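/- Let E₁ and E₂ be real vector spaces of finite dimensions n and m respectively, let E := E₁ × E₂ with canonical projections p₁ : E → E₁ and p₂ : E → E₂, let μ be a nonzero alternating n-form on E₁, and let α be an alternating m-form on E. Define the alternating m-form α̃ on E by α̃((u₁,v₁),…,(uₘ,vₘ)) := α((0,v₁),…,(0,vₘ)). Then p₁*μ ∧ α = p₁*μ ∧ α̃ as alternating (n+m)-forms on E. -/

import Mathlib

/-- The wedge product of a real-valued alternating `n`-form and a real-valued alternating
`m`-form, with the shuffle (determinant) convention. -/
noncomputable def wedgeProduct {E : Type*} [AddCommGroup E] [Module ℝ E] {n m : ℕ}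
    (ω : E [⋀^Fin n]→ₗ[ℝ] ℝ) (η : E [⋀^Fin m]→ₗ[ℝ] ℝ) : E [⋀^Fin (n + m)]→ₗ[ℝ] ℝ :=
  (TensorProduct.lid ℝ ℝ).toLinearMap.compAlternatingMap
    ((ω.domCoprod η).domDomCongr finSumFinEquiv)

/-!
On a basis of `E₁ × E₂` built from bases of `E₁` and `E₂`, the pulled-back form `p₁*μ` kills
every family containing a vector of `0 × E₂`.  So in a nonzero shuffle summand of `p₁*μ ∧ α`
evaluated on distinct basis vectors, the `n` arguments of `p₁*μ` are basis vectors of `E₁`;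
as `dim E₁ = n` these are all of them, and the `m` arguments of `α` lie in `0 × E₂`, where
`α` and `α̃` agree.
-/

theorem Equiv.Perm.not_apply_inr_of_forall_apply_inl {ιa ιb : Type*} [Finite ιa] [Finite ιb]
    (σ : Equiv.Perm (ιa ⊕ ιb)) {p : ιa ⊕ ιb → Prop} (hp : Nat.card {k // p k} ≤ Nat.card ιa)
    (hinl : ∀ i, p (σ (Sum.inl i))) (j : ιb) : ¬ p (σ (Sum.inr j)) := by
  intro hj
  let g : ιa → {k // p k} := fun i => ⟨σ (Sum.inl i), hinl i⟩
  have hg : Function.Injective g := fun i i' h =>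
    Sum.inl_injective (σ.injective (congrArg Subtype.val h))
  obtain ⟨i, hi⟩ := (hg.bijective_of_nat_card_le hp).surjective ⟨σ (Sum.inr j), hj⟩
  exact Sum.inl_ne_inr (σ.injective (congrArg Subtype.val hi))

namespace AlternatingMap

variable {R M N₁ N₂ : Type*} [CommSemiring R] [AddCommMonoid M] [Module R M]
  [AddCommGroup N₁] [Module R N₁] [AddCommGroup N₂] [Module R N₂]
  {ιa ιb : Type*} [Fintype ιa] [Fintype ιb] [DecidableEq ιa] [DecidableEq ιb]
  {ω : M [⋀^ιa]→ₗ[R] N₁} {α β : M [⋀^ιb]→ₗ[R] N₂} {s : Set M}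

theorem domCoprod_summand_congr (hω : ∀ x i, x i ∈ s → ω x = 0)
    (hαβ : ∀ x, (∀ j, x j ∈ s) → α x = β x) {v : ιa ⊕ ιb → M}
    (hv : Nat.card {k // v k ∉ s} ≤ Nat.card ιa) (σ : Equiv.Perm.ModSumCongr ιa ιb) :
    domCoprod.summand ω α σ v = domCoprod.summand ω β σ v := by
  induction σ using Quotient.inductionOn with
  | h σ =>
    simp only [domCoprod.summand_mk'', _root_.smul_apply,
      MultilinearMap.domDomCongr_apply, MultilinearMap.domCoprod_apply, coe_multilinearMap]
    by_cases hinl : ∀ i, v (σ (Sum.inl i)) ∉ s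
    · have hinr (j : ιb) : v (σ (Sum.inr j)) ∈ s :=
        not_not.mp (σ.not_apply_inr_of_forall_apply_inl hv hinl j)
      rw [hαβ _ hinr]
    · obtain ⟨i, hi⟩ := not_forall_not.mp hinl
      rw [hω (fun i => v (σ (Sum.inl i))) i hi, TensorProduct.zero_tmul, TensorProduct.zero_tmul]

theorem domCoprod_apply_congr (hω : ∀ x i, x i ∈ s → ω x = 0)
    (hαβ : ∀ x, (∀ j, x j ∈ s) → α x = β x) {v : ιa ⊕ ιb → M}
    (hv : Nat.card {k // v k ∉ s} ≤ Nat.card ιa) :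
    ω.domCoprod α v = ω.domCoprod β v := by
  simp only [domCoprod_apply, _root_.sum_apply]
  exact Finset.sum_congr rfl fun σ _ => domCoprod_summand_congr hω hαβ hv σ

end AlternatingMap

theorem Module.Basis.card_prod_fst_ne_zero_le {R M₁ M₂ ι₁ ι₂ κ : Type*} [Ring R]
    [AddCommGroup M₁] [Module R M₁] [AddCommGroup M₂] [Module R M₂] [Finite ι₁]
    (b₁ : Basis ι₁ R M₁) (b₂ : Basis ι₂ R M₂) {v : κ → ι₁ ⊕ ι₂} (hv : Function.Injective v) :
    Nat.card {k // ((b₁.prod b₂) (v k)).1 ≠ 0} ≤ Nat.card ι₁ := by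
  have hinl (k : {k // ((b₁.prod b₂) (v k)).1 ≠ 0}) : v k ∈ Set.range Sum.inl := by
    obtain ⟨k, hk⟩ := k
    rcases hvk : v k with i | j
    · exact ⟨i, rfl⟩
    · exact absurd (hvk ▸ b₁.prod_apply_inr_fst b₂ j) hk
  calc Nat.card {k // ((b₁.prod b₂) (v k)).1 ≠ 0}
      ≤ Nat.card (Set.range (Sum.inl : ι₁ → ι₁ ⊕ ι₂)) :=
        Nat.card_le_card_of_injective (fun k => ⟨v k, hinl k⟩)
          fun k k' h => Subtype.ext (hv (congrArg Subtype.val h))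
    _ = Nat.card ι₁ := Nat.card_range_of_injective Sum.inl_injective

theorem wedge_pullback_fst_eq_general {n m : ℕ}
    {E₁ : Type*} [AddCommGroup E₁] [Module ℝ E₁] [FiniteDimensional ℝ E₁]
    {E₂ : Type*} [AddCommGroup E₂] [Module ℝ E₂]
    (hn : Module.finrank ℝ E₁ = n)
    (μ : E₁ [⋀^Fin n]→ₗ[ℝ] ℝ)
    (α : (E₁ × E₂) [⋀^Fin m]→ₗ[ℝ] ℝ) :
    wedgeProduct (μ.compLinearMap (LinearMap.fst ℝ E₁ E₂)) α =
      wedgeProduct (μ.compLinearMap (LinearMap.fst ℝ E₁ E₂))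
        (α.compLinearMap ((LinearMap.inr ℝ E₁ E₂).comp (LinearMap.snd ℝ E₁ E₂))) := by
  let s : Set (E₁ × E₂) := {x | x.1 = 0}
  have hμ₀ (x : Fin n → E₁ × E₂) (i : Fin n) (hi : x i ∈ s) :
      μ.compLinearMap (LinearMap.fst ℝ E₁ E₂) x = 0 :=
    μ.map_coord_zero i hi
  have hα (x : Fin m → E₁ × E₂) (hx : ∀ j, x j ∈ s) :
      α x = α.compLinearMap ((LinearMap.inr ℝ E₁ E₂).comp (LinearMap.snd ℝ E₁ E₂)) x :=
    congrArg α (funext fun j => Prod.ext (hx j) rfl)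
  let b₁ := Module.finBasisOfFinrankEq ℝ E₁ hn
  let b₂ := Module.Free.chooseBasis ℝ E₂
  refine (b₁.prod b₂).ext_alternating fun v hv => ?_
  simp only [wedgeProduct, LinearMap.compAlternatingMap_apply,
    AlternatingMap.domDomCongr_apply]
  congr 1
  refine AlternatingMap.domCoprod_apply_congr hμ₀ hα ?_
  simpa [s] using b₁.card_prod_fst_ne_zero_le b₂ (hv.comp finSumFinEquiv.injective)

/-- Let `E₁`, `E₂` be real vector spaces of finite dimensions `n`, `m`, let `E := E₁ × E₂`
with canonical projections `p₁`, `p₂`, let `μ` be a nonzero alternating `n`-form on `E₁`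
and let `α` be an alternating `m`-form on `E`.  Define `α̃` by
`α̃((u₁,v₁),…,(uₘ,vₘ)) := α((0,v₁),…,(0,vₘ))`.  Then
`p₁*μ ∧ α = p₁*μ ∧ α̃` as alternating `(n+m)`-forms on `E`. -/
theorem wedge_pullback_fst_eq {n m : ℕ}
    {E₁ : Type*} [AddCommGroup E₁] [Module ℝ E₁] [FiniteDimensional ℝ E₁]
    {E₂ : Type*} [AddCommGroup E₂] [Module ℝ E₂] [FiniteDimensional ℝ E₂]
    (hn : Module.finrank ℝ E₁ = n) (hm : Module.finrank ℝ E₂ = m)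
    (μ : E₁ [⋀^Fin n]→ₗ[ℝ] ℝ) (hμ : μ ≠ 0)
    (α : (E₁ × E₂) [⋀^Fin m]→ₗ[ℝ] ℝ) :
    wedgeProduct (μ.compLinearMap (LinearMap.fst ℝ E₁ E₂)) α =
      wedgeProduct (μ.compLinearMap (LinearMap.fst ℝ E₁ E₂))
        (α.compLinearMap ((LinearMap.inr ℝ E₁ E₂).comp (LinearMap.snd ℝ E₁ E₂))) :=
  wedge_pullback_fst_eq_general hn μ α
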